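/- (Spherical/Higgs oscillator on S².) Let κ > 0, γ₁ = 2i, γ₂ = −κ, and let n be a positive integer. Then the Type I solution has spectrum E(n) = 2n + κn², the structure function satisfies Φ(B, E(n), −n/2) = 4B(n + 1 − B)(1 + κ(B − 1))(1 + κ(n − B)) for all B ∈ ℂ, this value is > 0 for every integer B with 1 ≤ B ≤ n, and the gap between consecutive levels is E(n+1) − E(n) = 2 + κ(2n + 1) > 0. -/
import Mathlib


noncomputable section
open Complex

/-- `Φ₁(B,E,u) = (1/4)(E − 2iγ₁(B+u) + 4γ₂(B+u)²)`. -/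
def Phi1 (γ₁ γ₂ B E u : ℂ) : ℂ :=
  (1/4) * (E - 2*I*γ₁*(B + u) + 4*γ₂*(B + u)^2)

/-- `Φ₂(B,E,u) = E + 2iγ₁(B+u−1) + 4γ₂(B+u−1)²`. -/
def Phi2 (γ₁ γ₂ B E u : ℂ) : ℂ :=
  E + 2*I*γ₁*(B + u - 1) + 4*γ₂*(B + u - 1)^2

/-- `Φ = Φ₁·Φ₂`, the structure function of the quadratic quantum Zernike system. -/
def Phi (γ₁ γ₂ B E u : ℂ) : ℂ := Phi1 γ₁ γ₂ B E u * Phi2 γ₁ γ₂ B E u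

/-- the spherical/Higgs oscillator on `S²`: for curvature `κ > 0`,
`γ₁ = 2i`, `γ₂ = −κ`, the Type I spectrum is `E(n) = 2n + κn²`, the structure
function factorizes as stated and is positive for integers `1 ≤ B ≤ n`, and the
gap between consecutive levels is `2 + κ(2n+1) > 0`. -/
theorem spherical_oscillator_spectrum (κ : ℝ) (hκ : 0 < κ) (n : ℕ) (hn : 1 ≤ n) :
    (-(n : ℂ) * (I*(2*I) + (-(κ : ℂ))*(n : ℂ)) = 2*(n : ℂ) + (κ : ℂ)*(n : ℂ)^2) ∧
    (∀ B : ℂ, Phi (2*I) (-(κ : ℂ)) B (2*(n : ℂ) + (κ : ℂ)*(n : ℂ)^2) (-(n : ℂ)/2)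
        = 4 * B * ((n : ℂ) + 1 - B) * (1 + (κ : ℂ)*(B - 1)) * (1 + (κ : ℂ)*((n : ℂ) - B))) ∧
    (∀ B : ℕ, 1 ≤ B → B ≤ n →
      ∃ r : ℝ, 0 < r ∧
        Phi (2*I) (-(κ : ℂ)) (B : ℂ) (2*(n : ℂ) + (κ : ℂ)*(n : ℂ)^2) (-(n : ℂ)/2) = (r : ℂ)) ∧
    ((2*((n : ℝ) + 1) + κ*((n : ℝ) + 1)^2) - (2*(n : ℝ) + κ*(n : ℝ)^2)
        = 2 + κ*(2*(n : ℝ) + 1)) ∧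
    (0 < 2 + κ*(2*(n : ℝ) + 1)) := by

  have hfac : ∀ B : ℂ, Phi (2*I) (-(κ : ℂ)) B (2*(n : ℂ) + (κ : ℂ)*(n : ℂ)^2) (-(n : ℂ)/2)
      = 4 * B * ((n : ℂ) + 1 - B) * (1 + (κ : ℂ)*(B - 1)) * (1 + (κ : ℂ)*((n : ℂ) - B)) := by
    intro B
    simp only [Phi, Phi1, Phi2]
    have h4 : (I:ℂ)^4 = 1 := by simp [pow_succ, Complex.I_sq]
    ring_nf
    simp only [Complex.I_sq, h4]
    ring
  refine ⟨?_, hfac, ?_, by ring, by positivity⟩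
  · have h : (I:ℂ)^2 = -1 := Complex.I_sq
    ring_nf
    simp only [Complex.I_sq]
    ring
  · intro B hB1 hBn
    refine ⟨4 * B * ((n : ℝ) + 1 - B) * (1 + κ*((B:ℝ) - 1)) * (1 + κ*((n : ℝ) - B)), ?_, ?_⟩
    · have h1 : (0:ℝ) < (B:ℝ) := by exact_mod_cast hB1
      have h2 : (0:ℝ) < (n : ℝ) + 1 - B := by
        have : (B:ℝ) ≤ n := by exact_mod_cast hBn
        linarith
      have h3 : (0:ℝ) ≤ (B:ℝ) - 1 := by
        have : (1:ℝ) ≤ (B:ℝ) := by exact_mod_cast hB1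
        linarith
      have h4 : (0:ℝ) ≤ (n:ℝ) - B := by
        have : (B:ℝ) ≤ n := by exact_mod_cast hBn
        linarith
      have := hκ
      positivity
    · rw [hfac]; push_cast; ring
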